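/- Let P be a convex polytope in ℝⁿ whose affine span Φ is a proper affine subspace, with P either of codimension at least 2, or of codimension 1 and a proper subset of Φ. Let R > 0, a ≥ 1, and let 𝔑 be a convex polytope with N_R(P) ⊆ 𝔑 ⊆ N_{aR}(P). Then the nearest-point projection of the boundary hypersurface ∂𝔑 onto ∂N_R(P) is bilipschitz with respect to the induced length metrics, with bilipschitz constant depending only on a. -/

import Mathlib

open Metric
open scoped ENNReal RealInnerProductSpace

/-- The length (intrinsic) metric on a subset `S` of a metric space. -/
noncomputable def lengthDist {E : Type*} [MetricSpace E] (S : Set E) (x y : E) : ℝ≥0∞ :=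
  ⨅ (γ : ℝ → E) (_ : ContinuousOn γ (Set.Icc 0 1)) (_ : γ 0 = x) (_ : γ 1 = y)
    (_ : ∀ t ∈ Set.Icc (0:ℝ) 1, γ t ∈ S), eVariationOn γ (Set.Icc 0 1)

/-- A convex polyhedron: an intersection of finitely many closed half-spaces. -/
def IsPolyhedron {n : ℕ} (P : Set (EuclideanSpace ℝ (Fin n))) : Prop :=
  ∃ (k : ℕ) (v : Fin k → EuclideanSpace ℝ (Fin n)) (c : Fin k → ℝ),
    P = {x | ∀ i, ⟪v i, x⟫ ≤ c i}

/-!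
Let `π` be the nearest-point map onto `P`, `C = N_R(P)` and `S = {infDist · P = R}`. A point `z`
with `infDist z P ≥ R` is `q + s • ν q`, where `q ∈ S` is its nearest point in `C` and
`ν q = (q - π q) / R` is the outer unit normal at `q`. Nearest-point maps onto convex sets are
`1`-Lipschitz, which bounds the projection `∂N → S`. Its inverse sends `q ∈ S` to the point
`q + t(q) • ν q` where the normal ray leaves `N`, with `0 ≤ t(q) ≤ (a - 1) R`. A hyperplane
supporting `N` at that point has distance at least `R` from `P`, so its unit normal `u`
satisfies `⟪u, ν q⟫ ≥ 1 / a`; as `ν` is `2 / R`-Lipschitz, this makes `t` `4 a²`-Lipschitz and the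
inverse `8 a²`-Lipschitz. Lipschitz maps stretch lengths of paths by at most their constant.
-/

open Set
open scoped NNReal

theorem lengthDist_le_mul_of_lipschitzOnWith {X Y : Type*} [MetricSpace X] [MetricSpace Y]
    {S : Set X} {T : Set Y} {f : X → Y} {K : ℝ≥0} (hK : K ≠ 0) (hf : LipschitzOnWith K f S)
    (hST : MapsTo f S T) (x y : X) :
    lengthDist T (f x) (f y) ≤ K * lengthDist S x y := by
  unfold lengthDist
  simp_rw [ENNReal.mul_iInf_of_ne (ENNReal.coe_ne_zero.2 hK) ENNReal.coe_ne_top]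
  refine le_iInf fun γ => le_iInf fun hγ => le_iInf fun h0 => le_iInf fun h1 =>
    le_iInf fun hγS => ?_
  have hS : MapsTo γ (Icc 0 1) S := fun t ht => hγS t ht
  calc lengthDist T (f x) (f y) ≤ eVariationOn (f ∘ γ) (Icc 0 1) :=
        iInf_le_of_le (f ∘ γ) <| iInf_le_of_le (hf.continuousOn.comp hγ hS) <|
          iInf_le_of_le (by simp [h0]) <| iInf_le_of_le (by simp [h1]) <|
            iInf_le_of_le (fun t ht => hST (hS ht)) le_rfl
    _ ≤ K * eVariationOn γ (Icc 0 1) := hf.comp_eVariationOn_le hS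

theorem IsPolyhedron.isClosed {n : ℕ} {P : Set (EuclideanSpace ℝ (Fin n))} (h : IsPolyhedron P) :
    IsClosed P := by
  obtain ⟨k, v, c, rfl⟩ := h
  simp only [ofPred_forall]
  exact isClosed_iInter fun i => isClosed_le (continuous_const.inner continuous_id)
    continuous_const

theorem IsPolyhedron.convex {n : ℕ} {P : Set (EuclideanSpace ℝ (Fin n))} (h : IsPolyhedron P) :
    Convex ℝ P := by
  obtain ⟨k, v, c, rfl⟩ := h
  simp only [ofPred_forall]
  exact convex_iInter fun i => convex_halfSpace_le (innerₛₗ ℝ (v i)).isLinear (c i)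

def IsNearestPoint {X : Type*} [PseudoMetricSpace X] (K : Set X) (z u : X) : Prop :=
  u ∈ K ∧ dist z u = infDist z K

theorem sub_le_infDist_setOf_infDist_le {X : Type*} [PseudoMetricSpace X] {P : Set X} {R : ℝ}
    (hne : {y | infDist y P ≤ R}.Nonempty) (z : X) :
    infDist z P - R ≤ infDist z {y | infDist y P ≤ R} :=
  (le_infDist hne).2 fun y (hy : infDist y P ≤ R) => by
    linarith [infDist_le_infDist_add_dist (x := z) (y := y) (s := P)]

section NearestPoint

variable {E : Type*} [NormedAddCommGroup E] [InnerProductSpace ℝ E] {K : Set E} {z z' u u' : E}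

theorem inner_sub_inner_le_dist (hu : ‖u‖ = 1) (x y : E) : ⟪u, x⟫ - ⟪u, y⟫ ≤ dist x y := by
  rw [← inner_sub_right, dist_eq_norm]
  simpa [hu] using real_inner_le_norm u (x - y)

theorem isNearestPoint_iff_inner_sub_nonpos (hK : Convex ℝ K) (hu : u ∈ K) :
    IsNearestPoint K z u ↔ ∀ w ∈ K, ⟪z - u, w - u⟫ ≤ 0 := by
  rw [← norm_eq_iInf_iff_real_inner_le_zero hK hu, IsNearestPoint, infDist_eq_iInf]
  simp only [hu, true_and, dist_eq_norm]

theorem IsNearestPoint.dist_le (hK : Convex ℝ K) (h : IsNearestPoint K z u)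
    (h' : IsNearestPoint K z' u') : dist u u' ≤ dist z z' := by
  have hu := (isNearestPoint_iff_inner_sub_nonpos hK h.1).1 h u' h'.1
  have hu' := (isNearestPoint_iff_inner_sub_nonpos hK h'.1).1 h' u h.1
  have key : ‖u - u'‖ ^ 2 ≤ ⟪z - z', u - u'⟫ := by
    have e : ⟪z - z', u - u'⟫ = ‖u - u'‖ ^ 2 - ⟪z - u, u' - u⟫ - ⟪z' - u', u - u'⟫ := by
      rw [show z - z' = (z - u) - (z' - u') + (u - u') by abel,
        show u' - u = -(u - u') by abel, inner_add_left, inner_sub_left, inner_neg_right,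
        real_inner_self_eq_norm_sq]
      ring
    linarith
  rw [dist_eq_norm, dist_eq_norm]
  nlinarith [real_inner_le_norm (z - z') (u - u'), norm_nonneg (u - u'), norm_nonneg (z - z')]

theorem IsNearestPoint.eq (hK : Convex ℝ K) (h : IsNearestPoint K z u)
    (h' : IsNearestPoint K z u') : u = u' :=
  dist_le_zero.1 (by simpa using h.dist_le hK h')

theorem IsNearestPoint.add_smul_sub (hK : Convex ℝ K) (h : IsNearestPoint K z u) {s : ℝ}
    (hs : 0 ≤ s) : IsNearestPoint K (u + s • (z - u)) u := by
  have hu := h.1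
  rw [isNearestPoint_iff_inner_sub_nonpos hK hu] at h
  refine (isNearestPoint_iff_inner_sub_nonpos hK hu).2 fun w hw => ?_
  rw [add_sub_cancel_left, real_inner_smul_left]
  exact mul_nonpos_of_nonneg_of_nonpos hs (h w hw)

theorem Convex.setOf_infDist_le {P : Set E} (hP : Convex ℝ P) (hne : P.Nonempty) {R : ℝ}
    (hR : 0 ≤ R) : Convex ℝ {z | infDist z P ≤ R} := by
  convert hP.cthickening R using 1
  ext z
  rw [mem_ofPred_eq, mem_cthickening_iff, ← ENNReal.ofReal_toReal (infEDist_ne_top hne),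
    ENNReal.ofReal_le_ofReal_iff hR]
  rfl

theorem Convex.exists_unit_inner_le_of_notMem_interior [CompleteSpace E] {N : Set E}
    (hN : Convex ℝ N) (hint : (interior N).Nonempty) (hz : z ∉ interior N) :
    ∃ u : E, ‖u‖ = 1 ∧ ∀ w ∈ N, ⟪u, w⟫ ≤ ⟪u, z⟫ := by
  obtain ⟨f, c, hf0, hfN, hfz⟩ := geometric_hahn_banach_of_nonempty_interior hN
    (convex_singleton z) (disjoint_singleton_right.2 hz) hint (singleton_nonempty z)
  set v := (InnerProductSpace.toDual ℝ E).symm f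
  have hv : v ≠ 0 := by simpa [v] using hf0
  refine ⟨‖v‖⁻¹ • v, norm_smul_inv_norm hv, fun w hw => ?_⟩
  simp only [real_inner_smul_left, v, InnerProductSpace.toDual_symm_apply]
  exact mul_le_mul_of_nonneg_left ((hfN w hw).trans (hfz z rfl)) (by positivity)

end NearestPoint

section Radial

variable {E : Type*} [NormedAddCommGroup E] [InnerProductSpace ℝ E]
  {P N : Set E} {π : E → E} {R a s t : ℝ} {q q₁ q₂ z u w : E}

noncomputable def outerNormal (π : E → E) (R : ℝ) (q : E) : E := R⁻¹ • (q - π q)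

theorem smul_outerNormal (hR : R ≠ 0) (q : E) : R • outerNormal π R q = q - π q := by
  rw [outerNormal, smul_smul, mul_inv_cancel₀ hR, one_smul]

theorem norm_outerNormal (hπ : ∀ z, IsNearestPoint P z (π z)) (hR : 0 < R)
    (hq : infDist q P = R) : ‖outerNormal π R q‖ = 1 := by
  rw [outerNormal, norm_smul, ← dist_eq_norm, (hπ q).2, hq,
    Real.norm_of_nonneg (inv_nonneg.2 hR.le), inv_mul_cancel₀ hR.ne']

theorem dist_outerNormal_le (hP : Convex ℝ P) (hπ : ∀ z, IsNearestPoint P z (π z)) (hR : 0 < R)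
    (q q' : E) : dist (outerNormal π R q) (outerNormal π R q') ≤ 2 / R * dist q q' := by
  calc dist (outerNormal π R q) (outerNormal π R q')
      = R⁻¹ * ‖(q - q') - (π q - π q')‖ := by
        rw [dist_eq_norm, outerNormal, outerNormal, ← smul_sub, norm_smul,
          Real.norm_of_nonneg (inv_nonneg.2 hR.le)]
        congr 2
        abel
    _ ≤ R⁻¹ * (dist q q' + dist (π q) (π q')) := by
        rw [dist_eq_norm, dist_eq_norm]
        gcongr
        exact norm_sub_le _ _
    _ ≤ R⁻¹ * (dist q q' + dist q q') := by gcongr; exact (hπ q).dist_le hP (hπ q')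
    _ = 2 / R * dist q q' := by ring

theorem isNearestPoint_add_smul_outerNormal (hP : Convex ℝ P)
    (hπ : ∀ z, IsNearestPoint P z (π z)) (hR : 0 < R) (ht : 0 ≤ t) (q : E) :
    IsNearestPoint P (q + t • outerNormal π R q) (π q) := by
  convert (hπ q).add_smul_sub hP (s := 1 + t / R) (by positivity) using 1
  rw [outerNormal]
  module

theorem infDist_add_smul_outerNormal (hP : Convex ℝ P) (hπ : ∀ z, IsNearestPoint P z (π z))
    (hR : 0 < R) (hq : infDist q P = R) (ht : 0 ≤ t) :
    infDist (q + t • outerNormal π R q) P = R + t := by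
  rw [← (isNearestPoint_add_smul_outerNormal hP hπ hR ht q).2, dist_eq_norm, add_sub_right_comm,
    ← smul_outerNormal hR.ne', ← add_smul, norm_smul, norm_outerNormal hπ hR hq, mul_one,
    Real.norm_of_nonneg (by linarith)]

theorem IsNearestPoint.infDist_eq_and_eq_add_smul_outerNormal (hP : Convex ℝ P)
    (hπ : ∀ z, IsNearestPoint P z (π z)) (hR : 0 < R) (hz : R ≤ infDist z P)
    (hw : IsNearestPoint {y | infDist y P ≤ R} z w) :
    infDist w P = R ∧ z = w + (infDist z P - R) • outerNormal π R w := by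
  set d := infDist z P
  have hd : 0 < d := hR.trans_le hz
  have hzd : ‖z - π z‖ = d := by rw [← dist_eq_norm, (hπ z).2]
  set q := π z + (R / d) • (z - π z)
  have hq : IsNearestPoint P q (π z) := (hπ z).add_smul_sub hP (by positivity)
  have hqR : infDist q P = R := by
    rw [← hq.2, dist_eq_norm, add_sub_cancel_left, norm_smul, hzd,
      Real.norm_of_nonneg (by positivity)]
    field_simp
  have hzq : dist z q = d - R := by
    rw [dist_eq_norm, show z - q = (1 - R / d) • (z - π z) by module, norm_smul, hzd,
      Real.norm_of_nonneg (by rw [sub_nonneg, div_le_one hd]; exact hz)]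
    field_simp
  have hzC : IsNearestPoint {y | infDist y P ≤ R} z q := by
    refine ⟨hqR.le, le_antisymm ?_ (infDist_le_dist_of_mem hqR.le)⟩
    rw [hzq]
    exact sub_le_infDist_setOf_infDist_le ⟨q, hqR.le⟩ z
  obtain rfl : q = w := hzC.eq (hP.setOf_infDist_le ⟨π z, (hπ z).1⟩ hR.le) hw
  have hν : outerNormal π R q = d⁻¹ • (z - π z) := by
    rw [outerNormal, (hπ q).eq hP hq, add_sub_cancel_left, smul_smul]
    congr 1
    field_simp
  refine ⟨hqR, ?_⟩
  rw [hν, add_assoc, smul_smul, ← add_smul,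
    show R / d + (d - R) * d⁻¹ = 1 by field_simp; ring, one_smul, add_sub_cancel]

noncomputable def radialExit (N : Set E) (π : E → E) (R : ℝ) (q : E) : ℝ :=
  sSup {t : ℝ | 0 ≤ t ∧ q + t • outerNormal π R q ∈ N}

noncomputable def radialMap (N : Set E) (π : E → E) (R : ℝ) (q : E) : E :=
  q + radialExit N π R q • outerNormal π R q

structure NeighborhoodSandwich (P N : Set E) (π : E → E) (R a : ℝ) : Prop where
  convex_P : Convex ℝ P
  isNearestPoint : ∀ z, IsNearestPoint P z (π z)
  pos : 0 < R
  isClosed : IsClosed N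
  convex : Convex ℝ N
  setOf_infDist_le_subset : {z | infDist z P ≤ R} ⊆ N
  subset_setOf_infDist_le : N ⊆ {z | infDist z P ≤ a * R}

namespace NeighborhoodSandwich

theorem le_sub_of_add_smul_mem (h : NeighborhoodSandwich P N π R a) (hq : infDist q P = R)
    (ht : 0 ≤ t) (hmem : q + t • outerNormal π R q ∈ N) : t ≤ a * R - R := by
  have : infDist (q + t • outerNormal π R q) P ≤ a * R := h.subset_setOf_infDist_le hmem
  rw [infDist_add_smul_outerNormal h.convex_P h.isNearestPoint h.pos hq ht] at this
  linarith

theorem radialExit_nonneg_and_radialMap_mem (h : NeighborhoodSandwich P N π R a) (hq : infDist q P = R) :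
    0 ≤ radialExit N π R q ∧ radialMap N π R q ∈ N := by
  have hclosed : IsClosed {t : ℝ | 0 ≤ t ∧ q + t • outerNormal π R q ∈ N} :=
    isClosed_Ici.inter (h.isClosed.preimage (by fun_prop))
  exact hclosed.csSup_mem ⟨0, le_rfl, by simpa using h.setOf_infDist_le_subset hq.le⟩
    ⟨a * R - R, fun t ht => h.le_sub_of_add_smul_mem hq ht.1 ht.2⟩

theorem le_radialExit (h : NeighborhoodSandwich P N π R a) (hq : infDist q P = R) (ht : 0 ≤ t)
    (hmem : q + t • outerNormal π R q ∈ N) : t ≤ radialExit N π R q :=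
  le_csSup ⟨a * R - R, fun _ ht => h.le_sub_of_add_smul_mem hq ht.1 ht.2⟩ ⟨ht, hmem⟩

theorem radialExit_le (h : NeighborhoodSandwich P N π R a) (hq : infDist q P = R) :
    radialExit N π R q ≤ a * R - R :=
  h.le_sub_of_add_smul_mem hq (h.radialExit_nonneg_and_radialMap_mem hq).1 (h.radialExit_nonneg_and_radialMap_mem hq).2

theorem radialMap_mem_frontier (h : NeighborhoodSandwich P N π R a) (hq : infDist q P = R) :
    radialMap N π R q ∈ frontier N := by
  refine ⟨subset_closure (h.radialExit_nonneg_and_radialMap_mem hq).2, fun hint => ?_⟩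
  obtain ⟨ε, hε, hball⟩ := Metric.isOpen_iff.1 isOpen_interior _ hint
  have hmem : q + (radialExit N π R q + ε / 2) • outerNormal π R q ∈ N := by
    refine interior_subset (hball ?_)
    rw [mem_ball, dist_eq_norm, radialMap,
      show q + (radialExit N π R q + ε / 2) • outerNormal π R q
        - (q + radialExit N π R q • outerNormal π R q) = (ε / 2) • outerNormal π R q by module,
      norm_smul, norm_outerNormal h.isNearestPoint h.pos hq, Real.norm_of_nonneg (by positivity)]
    linarith
  linarith [h.le_radialExit hq (by linarith [(h.radialExit_nonneg_and_radialMap_mem hq).1]) hmem]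

theorem nonempty_interior (h : NeighborhoodSandwich P N π R a) : (interior N).Nonempty := by
  refine ⟨π 0, interior_maximal (fun y hy => h.setOf_infDist_le_subset ?_) isOpen_ball
    (mem_ball_self h.pos)⟩
  exact (infDist_le_dist_of_mem (h.isNearestPoint 0).1).trans (mem_ball.1 hy).le

theorem le_infDist_of_mem_frontier (h : NeighborhoodSandwich P N π R a) (hz : z ∈ frontier N) :
    R ≤ infDist z P := by
  by_contra! hlt
  exact hz.2 (interior_maximal (fun w (hw : infDist w P < R) => h.setOf_infDist_le_subset hw.le)
    (isOpen_lt (continuous_infDist_pt P) continuous_const) hlt)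

theorem le_mul_inner_outerNormal (h : NeighborhoodSandwich P N π R a) (hu : ‖u‖ = 1)
    (hsupp : ∀ w ∈ N, ⟪u, w⟫ ≤ ⟪u, q + s • outerNormal π R q⟫) :
    R ≤ (R + s) * ⟪u, outerNormal π R q⟫ := by
  have hmem : π q + R • u ∈ N := h.setOf_infDist_le_subset <| by
    show infDist _ P ≤ R
    calc infDist (π q + R • u) P ≤ dist (π q + R • u) (π q) :=
          infDist_le_dist_of_mem (h.isNearestPoint q).1
      _ = R := by
        rw [dist_eq_norm, add_sub_cancel_left, norm_smul, hu, mul_one,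
          Real.norm_of_nonneg h.pos.le]
  have hsupp' := hsupp _ hmem
  rw [show q + s • outerNormal π R q = π q + (R + s) • outerNormal π R q by
      rw [add_smul, smul_outerNormal h.pos.ne']; abel,
    inner_add_right, inner_add_right, real_inner_smul_right, real_inner_smul_right,
    real_inner_self_eq_norm_sq, hu] at hsupp'
  linarith

theorem radialExit_eq_of_add_smul_mem_frontier [CompleteSpace E]
    (h : NeighborhoodSandwich P N π R a) (hq : infDist q P = R) (hs : 0 ≤ s)
    (hfr : q + s • outerNormal π R q ∈ frontier N) : radialExit N π R q = s := by
  obtain ⟨u, hu, hsupp⟩ :=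
    h.convex.exists_unit_inner_le_of_notMem_interior h.nonempty_interior hfr.2
  have hpos : 0 < ⟪u, outerNormal π R q⟫ := by
    by_contra! hneg
    nlinarith [h.le_mul_inner_outerNormal hu hsupp, h.pos]
  have hle := hsupp _ (h.radialExit_nonneg_and_radialMap_mem hq).2
  rw [radialMap, inner_add_right, inner_add_right, real_inner_smul_right,
    real_inner_smul_right] at hle
  exact le_antisymm (le_of_mul_le_mul_right (by linarith) hpos)
    (h.le_radialExit hq hs (h.isClosed.frontier_subset hfr))

theorem infDist_eq_of_isNearestPoint (h : NeighborhoodSandwich P N π R a)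
    (hz : z ∈ frontier N) (hw : IsNearestPoint {y | infDist y P ≤ R} z w) : infDist w P = R :=
  (hw.infDist_eq_and_eq_add_smul_outerNormal h.convex_P h.isNearestPoint h.pos
    (h.le_infDist_of_mem_frontier hz)).1

theorem radialMap_eq_of_isNearestPoint [CompleteSpace E] (h : NeighborhoodSandwich P N π R a)
    (hz : z ∈ frontier N) (hw : IsNearestPoint {y | infDist y P ≤ R} z w) :
    radialMap N π R w = z := by
  have hzR := h.le_infDist_of_mem_frontier hz
  obtain ⟨hwR, hzw⟩ :=
    hw.infDist_eq_and_eq_add_smul_outerNormal h.convex_P h.isNearestPoint h.pos hzR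
  rw [radialMap, h.radialExit_eq_of_add_smul_mem_frontier hwR (sub_nonneg.2 hzR) (hzw ▸ hz),
    ← hzw]

theorem radialExit_sub_le [CompleteSpace E] (h : NeighborhoodSandwich P N π R a) (ha : 1 ≤ a)
    (hq₁ : infDist q₁ P = R) (hq₂ : infDist q₂ P = R) :
    radialExit N π R q₂ - radialExit N π R q₁ ≤ 4 * a ^ 2 * dist q₁ q₂ := by
  set t₁ := radialExit N π R q₁
  set t₂ := radialExit N π R q₂
  set δ := dist q₁ q₂
  have hR := h.pos
  have ht₁ : 0 ≤ t₁ := (h.radialExit_nonneg_and_radialMap_mem hq₁).1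
  have ht₁a : t₁ ≤ a * R - R := h.radialExit_le hq₁
  have ht₂a : t₂ ≤ a * R - R := h.radialExit_le hq₂
  have hδ : 0 ≤ δ := dist_nonneg
  rcases le_or_gt R (4 * a * δ) with hfar | hnear
  · nlinarith
  rcases le_or_gt t₂ t₁ with hle | hlt
  · nlinarith
  -- `u` supports `N` at the exit point of `q₁`, so `⟪u, ν q₁⟫ ≥ 1 / a`; as `δ < R / (4 a)` and
  -- `ν` is `2 / R`-Lipschitz, also `⟪u, ν q₂⟫ ≥ 1 / (2 a)`.
  obtain ⟨u, hu, hsupp⟩ := h.convex.exists_unit_inner_le_of_notMem_interior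
    h.nonempty_interior (h.radialMap_mem_frontier hq₁).2
  set x₁ := ⟪u, outerNormal π R q₁⟫
  set x₂ := ⟪u, outerNormal π R q₂⟫
  have hsupp₂ : ⟪u, q₂⟫ + t₂ * x₂ ≤ ⟪u, q₁⟫ + t₁ * x₁ := by
    simpa only [radialMap, inner_add_right, real_inner_smul_right] using
      hsupp _ (h.radialExit_nonneg_and_radialMap_mem hq₂).2
  have hq : ⟪u, q₁⟫ - ⟪u, q₂⟫ ≤ δ := inner_sub_inner_le_dist hu q₁ q₂
  have hx : R * (x₁ - x₂) ≤ 2 * δ := by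
    have hx' := (inner_sub_inner_le_dist hu _ _).trans
      (dist_outerNormal_le h.convex_P h.isNearestPoint hR q₁ q₂)
    calc R * (x₁ - x₂) ≤ R * (2 / R * δ) := by gcongr
      _ = 2 * δ := by field_simp
  have hx₁ : 1 ≤ a * x₁ := by
    have hRx₁ := h.le_mul_inner_outerNormal hu hsupp
    have hx₁0 : 0 ≤ x₁ := by by_contra! hneg; nlinarith
    nlinarith
  have hx₂ : 1 ≤ 2 * a * x₂ := by nlinarith
  have hdiff : (t₂ - t₁) * x₂ ≤ (2 * a - 1) * δ := by nlinarith
  nlinarith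

theorem lipschitzOnWith_radialMap [CompleteSpace E] (h : NeighborhoodSandwich P N π R a)
    (ha : 1 ≤ a) :
    LipschitzOnWith (8 * a ^ 2).toNNReal (radialMap N π R) {q | infDist q P = R} := by
  refine LipschitzOnWith.of_dist_le_mul fun q₁ hq₁ q₂ hq₂ => ?_
  rw [Real.coe_toNNReal _ (by positivity)]
  set t₁ := radialExit N π R q₁
  set t₂ := radialExit N π R q₂
  set ν₁ := outerNormal π R q₁
  set ν₂ := outerNormal π R q₂
  have ht : |t₁ - t₂| ≤ 4 * a ^ 2 * dist q₁ q₂ := abs_sub_le_iff.2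
    ⟨by simpa [dist_comm] using h.radialExit_sub_le ha hq₂ hq₁, h.radialExit_sub_le ha hq₁ hq₂⟩
  have ht₂ : 0 ≤ t₂ := (h.radialExit_nonneg_and_radialMap_mem hq₂).1
  have hR := h.pos
  calc dist (radialMap N π R q₁) (radialMap N π R q₂)
      = ‖(q₁ - q₂) + ((t₁ - t₂) • ν₁ + t₂ • (ν₁ - ν₂))‖ := by
        rw [dist_eq_norm, radialMap, radialMap]
        congr 1
        module
    _ ≤ dist q₁ q₂ + (|t₁ - t₂| + t₂ * dist ν₁ ν₂) := by
        refine (norm_add_le _ _).trans (add_le_add (dist_eq_norm _ _).ge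
          ((norm_add_le _ _).trans (add_le_add ?_ ?_)))
        · rw [norm_smul, Real.norm_eq_abs, norm_outerNormal h.isNearestPoint hR hq₁, mul_one]
        · rw [norm_smul, Real.norm_of_nonneg ht₂, dist_eq_norm]
    _ ≤ dist q₁ q₂ + (4 * a ^ 2 * dist q₁ q₂ + (a * R - R) * (2 / R * dist q₁ q₂)) := by
        have ht₂a := h.radialExit_le hq₂
        have hν := dist_outerNormal_le h.convex_P h.isNearestPoint hR q₁ q₂
        have haR : 0 ≤ a * R - R := by nlinarith
        gcongr
    _ ≤ 8 * a ^ 2 * dist q₁ q₂ := by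
        have hδ : 0 ≤ dist q₁ q₂ := dist_nonneg
        rw [show (a * R - R) * (2 / R * dist q₁ q₂) = 2 * (a - 1) * dist q₁ q₂ by field_simp]
        nlinarith [mul_nonneg (sq_nonneg (2 * a - 1)) hδ, mul_nonneg (by linarith : (0:ℝ) ≤ a) hδ]

end NeighborhoodSandwich

end Radial

/-- Let `P` be a convex polytope of codimension at least 2, or of codimension 1 and a
proper subset of its affine span, and let `𝔑` be a convex polytope with
`N_R(P) ⊆ 𝔑 ⊆ N_{aR}(P)`. Then the nearest-point projection of `∂𝔑` onto `∂N_R(P)`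
is bilipschitz for the induced length metrics, with constant depending only on `a`. -/
theorem projection_polytope_boundary_bilipschitz :
    ∀ a : ℝ, 1 ≤ a → ∃ K : ℝ≥0∞, 0 < K ∧ K < ⊤ ∧
    ∀ (n : ℕ) (P : Set (EuclideanSpace ℝ (Fin n))),
      IsPolyhedron P → P.Nonempty →
      ((Module.finrank ℝ (affineSpan ℝ P).direction + 2 ≤ n) ∨
        (Module.finrank ℝ (affineSpan ℝ P).direction + 1 = n ∧
          P ≠ (affineSpan ℝ P : Set (EuclideanSpace ℝ (Fin n))))) →
      ∀ R : ℝ, 0 < R →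
      ∀ N : Set (EuclideanSpace ℝ (Fin n)), IsPolyhedron N →
        {z | infDist z P ≤ R} ⊆ N → N ⊆ {z | infDist z P ≤ a * R} →
      ∀ p : EuclideanSpace ℝ (Fin n) → EuclideanSpace ℝ (Fin n),
        (∀ x ∈ frontier N, p x ∈ {z | infDist z P ≤ R} ∧
          dist x (p x) = infDist x {z | infDist z P ≤ R}) →
        ∀ x ∈ frontier N, ∀ y ∈ frontier N,
          lengthDist {z | infDist z P = R} (p x) (p y) ≤
              K * lengthDist (frontier N) x y ∧
          lengthDist (frontier N) x y ≤
              K * lengthDist {z | infDist z P = R} (p x) (p y) := by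
  intro a ha
  have hK : 1 ≤ (8 * a ^ 2).toNNReal := by
    rw [← Real.toNNReal_one]
    exact Real.toNNReal_le_toNNReal (by nlinarith)
  refine ⟨(8 * a ^ 2).toNNReal, by simpa using one_pos.trans_le hK, ENNReal.coe_lt_top, ?_⟩
  intro n P hP hPne _ R hR N hN hCN hNa p hp x hx y hy
  obtain ⟨π, hπ⟩ : ∃ π : _ → _, ∀ z, IsNearestPoint P z (π z) := by
    choose π hπP hπ using hP.isClosed.exists_infDist_eq_dist hPne
    exact ⟨π, fun z => ⟨hπP z, (hπ z).symm⟩⟩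
  have h : NeighborhoodSandwich P N π R a :=
    ⟨hP.convex, hπ, hR, hN.isClosed, hN.convex, hCN, hNa⟩
  have hp : ∀ z ∈ frontier N, IsNearestPoint {z | infDist z P ≤ R} z (p z) := hp
  have hC := hP.convex.setOf_infDist_le hPne hR.le
  have hpS : MapsTo p (frontier N) {z | infDist z P = R} := fun z hz =>
    h.infDist_eq_of_isNearestPoint hz (hp z hz)
  have hpLip : LipschitzOnWith 1 p (frontier N) :=
    LipschitzOnWith.of_dist_le_mul fun z hz w hw => by
      simpa using (hp z hz).dist_le hC (hp w hw)
  constructor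
  · calc lengthDist {z | infDist z P = R} (p x) (p y) ≤ (1 : ℝ≥0) * lengthDist (frontier N) x y :=
          lengthDist_le_mul_of_lipschitzOnWith one_ne_zero hpLip hpS x y
      _ ≤ _ := by gcongr
  · have := lengthDist_le_mul_of_lipschitzOnWith (one_pos.trans_le hK).ne'
      (h.lipschitzOnWith_radialMap ha) (fun q hq => h.radialMap_mem_frontier hq) (p x) (p y)
    rwa [h.radialMap_eq_of_isNearestPoint hx (hp x hx),
      h.radialMap_eq_of_isNearestPoint hy (hp y hy)] at this
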